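/- arXiv:1510.04532 — 3 statements merged into one kernel-verified Lean document; each statement's English description precedes it below -/
import Mathlib

section
/- The graphic matroid of the 3-cycle C_3 with each edge doubled (two parallel copies of each edge) is not a transversal matroid. -/
/-!
Two parallel elements of a transversal matroid can only be matched into the same set of a
presentation, since otherwise they would form a partial transversal; as both are nonloops, each
of them lies in exactly one set. In the doubled triangle each of the edges `0, 2, 4` has a
parallel partner and any two of them form a forest, so they lie in three distinct sets and the
triangle `{0, 2, 4}` is a partial transversal, although it is a cycle.
-/

open Matroid Set

namespace IPF

variable {α : Type*}

/-- `M` is (a copy of) the uniform matroid of rank `r` on ground set `E`: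
the independent sets are exactly the subsets of `E` with at most `r` elements. -/
def IsUniformOn (M : Matroid α) (E : Set α) (r : ℕ) : Prop :=
  M.E = E ∧ ∀ I : Set α, M.Indep I ↔ I ⊆ E ∧ I.Finite ∧ I.ncard ≤ r

/-- The fundamental cocircuit `C*(B;e)` of `e ∈ B` with respect to a base `B`:
the set of all `f` such that `(B \ {e}) ∪ {f}` is a base. -/
def fundCocircuit (M : Matroid α) (B : Set α) (e : α) : Set α :=
  {f | M.IsBase (insert f (B \ {e}))}

/-- A circuit is a minimal dependent set. -/
def Circuit (M : Matroid α) (C : Set α) : Prop :=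
  C ⊆ M.E ∧ ¬ M.Indep C ∧ ∀ D ⊂ C, M.Indep D

/-- `M` has rank `r` : every base has exactly `r` elements. -/
def HasRank (M : Matroid α) (r : ℕ) : Prop :=
  ∀ B, M.IsBase B → B.ncard = r

/-- A matroid is paving if every circuit has at least rank-many elements. -/
def IsPaving (M : Matroid α) : Prop :=
  ∀ C, Circuit M C → ∀ B, M.IsBase B → B.ncard ≤ C.ncard

/-- Isomorphism of matroids: a bijection of ground sets preserving independence. -/
def IsIso {β : Type*} (M : Matroid α) (N : Matroid β) : Prop :=
  ∃ φ : M.E ≃ N.E, ∀ I : Set M.E,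
    M.Indep ((↑) '' I) ↔ N.Indep ((↑) '' (φ '' I))

/-- `M` is a transversal matroid: independent sets are exactly the partial
transversals of a finite set system `A : Fin k → Set α`. -/
def IsTransversal (M : Matroid α) : Prop :=
  ∃ (k : ℕ) (A : Fin k → Set α), ∀ I : Set α,
    M.Indep I ↔ I ⊆ M.E ∧ ∃ m : α → Fin k, Set.InjOn m I ∧ ∀ x ∈ I, x ∈ A (m x)

/-- An edge set of the multigraph with incidence map `inc` is a forest iff every finite
nonempty subset uses strictly more vertices than it has edges. -/
def IsForest {ε V : Type*} (inc : ε → Sym2 V) (I : Set ε) : Prop :=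
  ∀ J ⊆ I, J.Finite → J.Nonempty → J.ncard < {v | ∃ e ∈ J, v ∈ inc e}.ncard

/-- `M` is the cycle matroid, on ground set `Eset`, of the multigraph whose edges are
`ε` with endpoints given by `inc` : independent sets are the forests inside `Eset`. -/
def IsCycleMatroidOn {ε V : Type*} (M : Matroid ε) (Eset : Set ε) (inc : ε → Sym2 V) : Prop :=
  M.E = Eset ∧ ∀ I : Set ε, M.Indep I ↔ I ⊆ Eset ∧ IsForest inc I

/-- A matroid is graphic if it is isomorphic to the cycle matroid of some multigraph. -/
def IsGraphic (M : Matroid α) : Prop :=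
  ∃ (V ε : Type) (N : Matroid ε) (inc : ε → Sym2 V),
    IsCycleMatroidOn N N.E inc ∧ IsIso M N

/-- A matroid is cographic if it is isomorphic to the dual of a graphic matroid,
equivalently its dual is graphic. -/
def IsCographic (M : Matroid α) : Prop := IsGraphic M✶

/-- Two elements are parallel if each is independent but together they are dependent. -/
def Parallel (M : Matroid α) (e f : α) : Prop :=
  e ≠ f ∧ M.Indep {e} ∧ M.Indep {f} ∧ ¬ M.Indep ({e, f} : Set α)

/-- A parallel class: the set of all elements parallel (or equal) to a fixed nonloop. -/
def IsParallelClass (M : Matroid α) (P : Set α) : Prop :=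
  ∃ e, M.Indep {e} ∧ P = {f | f = e ∨ Parallel M e f}

section Order

variable [LinearOrder α]

/-- `e` is internally active in the base `B` if `e ∈ B` is the minimum of its
fundamental cocircuit. -/
def IntActive (M : Matroid α) (B : Set α) (e : α) : Prop :=
  e ∈ B ∧ ∀ f ∈ fundCocircuit M B e, e ≤ f

/-- `S(B)` : the set of internally passive elements of the base `B`. -/
def passives (M : Matroid α) (B : Set α) : Set α :=
  {e ∈ B | ¬ IntActive M B e}

/-- The internal order on bases: `B ≤ B'` iff `S(B) ⊆ S(B')`. -/
def intLE (M : Matroid α) (B B' : Set α) : Prop :=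
  M.IsBase B ∧ M.IsBase B' ∧ passives M B ⊆ passives M B'

/-- `B` is the `f`-principal base: an internal-order-minimal base in which `f` is
internally passive. -/
def IsPrincipal (M : Matroid α) (B : Set α) (f : α) : Prop :=
  M.IsBase B ∧ f ∈ passives M B ∧
    ∀ B', M.IsBase B' → f ∈ passives M B' → passives M B ⊆ passives M B'

/-- A base `B` is internally perfect: its set `S(B)` of internally passive elements
decomposes as the disjoint union, over `f ∈ S(B)`, of the blocks `T(B;f)` given by the
internally passive sets of the corresponding principal bases. -/
def PerfectBase (M : Matroid α) (B : Set α) : Prop :=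
  M.IsBase B ∧ ∃ P : α → Set α,
    (∀ f ∈ passives M B, IsPrincipal M (P f) f) ∧
    (∀ f ∈ passives M B, ∀ g ∈ passives M B, f ≠ g →
      Disjoint (passives M (P f)) (passives M (P g))) ∧
    passives M B = ⋃ f ∈ passives M B, passives M (P f)

/-- An ordered matroid is internally perfect if every base is internally perfect. -/
def InternallyPerfect (M : Matroid α) : Prop :=
  ∀ B, M.IsBase B → PerfectBase M B

end Order

/-- The edge-incidence map of the graphs `G_r` : edges `1,2` join vertices `1,2`;
for `j ≥ 2`, edge `2j-1` joins `j` and `j+1`, and edge `2j` joins `1` and `j+1`. -/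
def incG : ℕ → Sym2 ℕ := fun e =>
  if e ≤ 2 then s(1, 2)
  else if e % 2 = 1 then s((e + 1) / 2, (e + 3) / 2)
  else s(1, (e + 2) / 2)

/-- The incidence map of `K₄`. -/
def incK4 : Fin 6 → Sym2 (Fin 4) :=
  ![s(0, 1), s(0, 2), s(0, 3), s(1, 2), s(1, 3), s(2, 3)]

/-- The incidence map of the doubled triangle `C₃²`. -/
def incC3double : Fin 6 → Sym2 (Fin 3) :=
  ![s(0, 1), s(0, 1), s(1, 2), s(1, 2), s(0, 2), s(0, 2)]

/-- `M` is the column (vector) matroid of the matrix `A`. -/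
def IsColMatroid {m n K : Type*} [Field K] (M : Matroid n) (A : Matrix m n K) : Prop :=
  M.E = univ ∧ ∀ I : Set n, M.Indep I ↔ LinearIndependent K (fun j : I => A.transpose (j : n))

def IsPresentation (M : Matroid α) {k : ℕ} (A : Fin k → Set α) : Prop :=
  ∀ I : Set α, M.Indep I ↔ I ⊆ M.E ∧ ∃ m : α → Fin k, Set.InjOn m I ∧ ∀ x ∈ I, x ∈ A (m x)

namespace IsPresentation

variable {M : Matroid α} {k : ℕ} {A : Fin k → Set α}

theorem exists_mem (hA : IsPresentation M A) {a : α} (ha : M.Indep {a}) : ∃ i, a ∈ A i := by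
  obtain ⟨-, m, -, hm⟩ := (hA {a}).mp ha
  exact ⟨m a, hm a rfl⟩

theorem indep_pair (hA : IsPresentation M A) {a b : α} (hab : a ≠ b) (ha : a ∈ M.E)
    (hb : b ∈ M.E) {i j : Fin k} (hij : i ≠ j) (hai : a ∈ A i) (hbj : b ∈ A j) :
    M.Indep {a, b} := by
  classical
  refine (hA _).mpr ⟨pair_subset ha hb, fun x => if x = a then i else j, ?_, ?_⟩
  · simp [hab.symm, hij]
  · rintro x (rfl | rfl) <;> simpa [hab.symm]

theorem eq_of_parallel (hA : IsPresentation M A) {a b : α} (hab : Parallel M a b) {i j : Fin k}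
    (hai : a ∈ A i) (hbj : b ∈ A j) : i = j := by
  obtain ⟨hne, ha, hb, hdep⟩ := hab
  by_contra hij
  exact hdep (hA.indep_pair hne (ha.subset_ground rfl) (hb.subset_ground rfl) hij hai hbj)

theorem existsUnique_mem_of_parallel (hA : IsPresentation M A) {a b : α}
    (hab : Parallel M a b) : ∃! i, a ∈ A i := by
  obtain ⟨i, hai⟩ := hA.exists_mem hab.2.1
  obtain ⟨j, hbj⟩ := hA.exists_mem hab.2.2.1
  exact ⟨i, hai, fun i' hai' => (hA.eq_of_parallel hab hai' hbj).trans
    (hA.eq_of_parallel hab hai hbj).symm⟩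

theorem indep_of_pairwise (hA : IsPresentation M A) {I : Set α} (hI : I ⊆ M.E)
    (hunique : ∀ x ∈ I, ∃! i, x ∈ A i) (hpair : I.Pairwise fun x y => M.Indep {x, y}) :
    M.Indep I := by
  obtain rfl | ⟨x₀, hx₀⟩ := I.eq_empty_or_nonempty
  · exact M.empty_indep
  have : Nonempty (Fin k) := ⟨(hunique x₀ hx₀).exists.choose⟩
  choose! r hr hr_unique using hunique
  refine (hA I).mpr ⟨hI, r, fun x hx y hy hrxy => ?_, hr⟩
  by_contra hxy
  obtain ⟨-, m, hm_inj, hm⟩ := (hA _).mp (hpair hx hy hxy)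
  have hmx : m x = r x := hr_unique x hx _ (hm x (mem_insert x _))
  have hmy : m y = r y := hr_unique y hy _ (hm y (mem_insert_of_mem x rfl))
  exact hxy (hm_inj (mem_insert x _) (mem_insert_of_mem x rfl) (by rw [hmx, hmy, hrxy]))

end IsPresentation

theorem IsTransversal.indep_of_pairwise_of_parallel {M : Matroid α} (hM : IsTransversal M)
    {I : Set α} (hpar : ∀ x ∈ I, ∃ y, Parallel M x y)
    (hpair : I.Pairwise fun x y => M.Indep {x, y}) :
    M.Indep I := by
  obtain ⟨k, A, hA : IsPresentation M A⟩ := hM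
  refine IsPresentation.indep_of_pairwise hA (fun x hx => ?_) (fun x hx => ?_) hpair
  · obtain ⟨y, hxy⟩ := hpar x hx
    exact hxy.2.1.subset_ground rfl
  · obtain ⟨y, hxy⟩ := hpar x hx
    exact hA.existsUnique_mem_of_parallel hxy

section Forest

variable {ε V : Type*} {inc : ε → Sym2 V}

def vertexSet (inc : ε → Sym2 V) (J : Set ε) : Set V :=
  {v | ∃ e ∈ J, v ∈ inc e}

theorem vertexSet_singleton (e : ε) : vertexSet inc {e} = {v | v ∈ inc e} := by
  simp [vertexSet]

theorem ncard_setOf_mem_sym2 {z : Sym2 V} (hz : ¬ z.IsDiag) : {v | v ∈ z}.ncard = 2 := by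
  induction z using Sym2.ind with
  | _ u w =>
    rw [Sym2.mk_isDiag_iff] at hz
    rw [show {v | v ∈ s(u, w)} = {u, w} by ext; simp, ncard_pair hz]

theorem isForest_singleton {e : ε} (he : ¬ (inc e).IsDiag) : IsForest inc {e} := by
  intro J hJ _ hne
  obtain rfl := (subset_singleton_iff_eq.mp hJ).resolve_left hne.ne_empty
  show _ < (vertexSet inc {e}).ncard
  rw [vertexSet_singleton, ncard_setOf_mem_sym2 he, ncard_singleton]
  exact one_lt_two

theorem isForest_pair {a b : ε} (hab : a ≠ b) (ha : ¬ (inc a).IsDiag)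
    (hb : ¬ (inc b).IsDiag) (hV : 2 < (vertexSet inc {a, b}).ncard) : IsForest inc {a, b} := by
  intro J hJ hfin hne
  rcases subset_pair_iff_eq.mp hJ with rfl | rfl | rfl | rfl
  · exact absurd rfl hne.ne_empty
  · exact isForest_singleton ha _ subset_rfl hfin hne
  · exact isForest_singleton hb _ subset_rfl hfin hne
  · rwa [ncard_pair hab]

theorem not_isForest_of_ncard_le {J : Set ε} (hfin : J.Finite) (hne : J.Nonempty)
    (hV : (vertexSet inc J).ncard ≤ J.ncard) : ¬ IsForest inc J :=
  fun hF => (hF J subset_rfl hfin hne).not_ge hV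

end Forest

namespace IsCycleMatroidOn

variable {ε V : Type*} {M : Matroid ε} {inc : ε → Sym2 V}

theorem indep_iff_isForest (hM : IsCycleMatroidOn M univ inc) {I : Set ε} :
    M.Indep I ↔ IsForest inc I :=
  (hM.2 I).trans (and_iff_right (subset_univ I))

theorem parallel (hM : IsCycleMatroidOn M univ inc) {a b : ε} (hab : a ≠ b)
    (ha : ¬ (inc a).IsDiag) (hinc : inc a = inc b) : Parallel M a b := by
  refine ⟨hab, hM.indep_iff_isForest.mpr (isForest_singleton ha),
    hM.indep_iff_isForest.mpr (isForest_singleton (hinc ▸ ha)), fun h => ?_⟩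
  refine not_isForest_of_ncard_le (toFinite _) (insert_nonempty a {b}) ?_
    (hM.indep_iff_isForest.mp h)
  have hV : vertexSet inc {a, b} = {v | v ∈ inc a} := by
    ext v
    simp [vertexSet, hinc]
  rw [hV, ncard_setOf_mem_sym2 ha, ncard_pair hab]

end IsCycleMatroidOn

theorem not_isDiag_incC3double (e : Fin 6) : ¬ (incC3double e).IsDiag := by
  fin_cases e <;> decide

theorem vertexSet_incC3double_pair {x y : Fin 6} (hx : x ∈ ({0, 2, 4} : Set (Fin 6)))
    (hy : y ∈ ({0, 2, 4} : Set (Fin 6))) (hxy : x ≠ y) :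
    vertexSet incC3double {x, y} = univ := by
  rcases hx with rfl | rfl | rfl <;> rcases hy with rfl | rfl | rfl <;>
    first
      | exact absurd rfl hxy
      | ext w; fin_cases w <;> simp [vertexSet, incC3double]

/-- The cycle matroid of the doubled triangle `C₃²` is not transversal. -/
theorem stmt6 (M : Matroid (Fin 6)) (hM : IsCycleMatroidOn M univ incC3double) :
    ¬ IsTransversal M := by
  intro hT
  have hpar : ∀ x ∈ ({0, 2, 4} : Set (Fin 6)), ∃ y, Parallel M x y := by
    rintro x (rfl | rfl | rfl)
    exacts [⟨1, hM.parallel (by decide) (not_isDiag_incC3double 0) rfl⟩,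
      ⟨3, hM.parallel (by decide) (not_isDiag_incC3double 2) rfl⟩,
      ⟨5, hM.parallel (by decide) (not_isDiag_incC3double 4) rfl⟩]
  have hpair : ({0, 2, 4} : Set (Fin 6)).Pairwise fun x y => M.Indep {x, y} :=
    fun x hx y hy hxy => hM.indep_iff_isForest.mpr <|
      isForest_pair hxy (not_isDiag_incC3double x) (not_isDiag_incC3double y)
        (by simp [vertexSet_incC3double_pair hx hy hxy])
  have htriangle : ¬ M.Indep ({0, 2, 4} : Set (Fin 6)) := fun h =>
    not_isForest_of_ncard_le (toFinite _) (insert_nonempty 0 _)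
      (by rw [ncard_eq_three.mpr ⟨0, 2, 4, by decide, by decide, by decide, rfl⟩]
          simpa using ncard_le_card (vertexSet incC3double {0, 2, 4}))
      (hM.indep_iff_isForest.mp h)
  exact htriangle (hT.indep_of_pairwise_of_parallel hpar hpair)

end IPF
end

section
/- The dual of the vector matroid of the matrix N = [[2,1,3,3,-1,-1,0,0,-1,-1],[1,1,1,1,1,1,1,1,0,0],[0,0,0,0,0,0,-1,-1,1,1]] over ℚ has exactly the following circuits: {1,2,3,4}, {1,2,5,6,7,8}, {1,3,4,5,6,7,8}, {2,3,4,5,6,7,8}, {1,2,5,6,9,10}, {1,3,4,5,6,9,10}, {2,3,4,5,6,9,10}, {7,8,9,10} (elements labelled by column index). -/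
/-!
Every cocircuit of a matroid is a fundamental cocircuit `C*(B; e)`. In a column matroid of
rank 3 with columns `v`, the base `B` is a triple `{e, x, y}`, and `f ∈ C*(B; e)` exactly when
`{f, x, y}` is a base, i.e. when `det (v f, v x, v y) ≠ 0`. So the cocircuits are the nonempty
supports of the linear forms `det (·, v x, v y)`, i.e. the complements of the planes spanned by
pairs of columns, and for the matrix `N` a finite computation over the pairs `(x, y)` lists them.
-/

open Matroid Set

namespace IPF

variable {α : Type*}

/-- The matrix `N` from the paper. -/
noncomputable def Nmat : Matrix (Fin 3) (Fin 10) ℚ :=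
  !![2, 1, 3, 3, -1, -1, 0, 0, -1, -1;
     1, 1, 1, 1, 1, 1, 1, 1, 0, 0;
     0, 0, 0, 0, 0, 0, -1, -1, 1, 1]

open scoped Matrix

section Cocircuits

variable {M : Matroid α} {B C K : Set α} {e : α}

theorem circuit_iff_isCircuit : Circuit M C ↔ M.IsCircuit C := by
  rw [isCircuit_iff_forall_ssubset, Matroid.dep_iff, Circuit]
  tauto

theorem matroid_fundCocircuit_eq (hB : M.IsBase B) (he : e ∈ B) :
    M.fundCocircuit e B = IPF.fundCocircuit M B e := by
  ext f
  change f ∈ M.fundCocircuit e B ↔ M.IsBase (insert f (B \ {e}))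
  rw [hB.mem_fundCocircuit_iff_mem_fundCircuit]
  by_cases hfB : f ∈ B
  · rw [fundCircuit_eq_of_mem hfB, mem_singleton_iff]
    refine ⟨fun hef => by rwa [← hef, insert_sdiff_singleton, insert_eq_of_mem he], fun h => ?_⟩
    by_contra hef
    rw [insert_eq_of_mem (show f ∈ B \ {e} from ⟨hfB, Ne.symm hef⟩)] at h
    exact (h.eq_of_subset_isBase hB sdiff_subset ▸ he).2 rfl
  by_cases hfE : f ∈ M.E
  · rw [hB.indep.mem_fundCircuit_iff (by rwa [hB.closure_eq]) hfB,
      ← insert_sdiff_singleton_comm (ne_of_mem_of_not_mem he hfB).symm]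
    exact ⟨hB.exchange_isBase_of_indep hfB, IsBase.indep⟩
  · rw [fundCircuit_eq_of_notMem_ground hfE, mem_singleton_iff]
    exact iff_of_false (by rintro rfl; exact hfB he)
      fun h => hfE (h.subset_ground (mem_insert _ _))

theorem isCocircuit_fundCocircuit (hB : M.IsBase B) (he : e ∈ B) :
    M.IsCocircuit (IPF.fundCocircuit M B e) :=
  matroid_fundCocircuit_eq hB he ▸ fundCocircuit_isCocircuit he hB

theorem exists_eq_fundCocircuit_of_isCocircuit (hK : M.IsCocircuit K) (he : e ∈ K) :
    ∃ B, M.IsBase B ∧ e ∈ B ∧ K = IPF.fundCocircuit M B e := by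
  obtain ⟨-, B, hB, hdisj⟩ := dual_indep_iff_exists'.1 (hK.isCircuit.sdiff_singleton_indep he)
  have hKB : ∀ f ∈ K, f ∈ B → f = e := fun f hfK hfB =>
    by_contra fun hfe => disjoint_left.1 hdisj ⟨hfK, hfe⟩ hfB
  obtain ⟨f, hfK, hfB⟩ := (isCocircuit_iff_minimal.1 hK).prop B hB
  have heB : e ∈ B := hKB f hfK hfB ▸ hfB
  refine ⟨B, hB, heB, ?_⟩
  rw [← matroid_fundCocircuit_eq hB heB]
  refine hK.isCircuit.eq_fundCircuit_of_subset hB.compl_isBase_dual.indep fun f hfK => ?_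
  by_cases hfe : f = e
  · exact hfe ▸ mem_insert _ _
  · exact mem_insert_of_mem _ ⟨hK.subset_ground hfK, fun hfB => hfe (hKB f hfK hfB)⟩

end Cocircuits

section Determinants

variable {K ι : Type*} [Field K]

theorem pairwise_ne_of_det_ne_zero {v : ι → Fin 3 → K} {i j k : ι}
    (h : Matrix.det ![v i, v j, v k] ≠ 0) : i ≠ j ∧ i ≠ k ∧ j ≠ k := by
  refine ⟨?_, ?_, ?_⟩ <;> rintro rfl <;> apply h
  exacts [Matrix.det_zero_of_row_eq (i := 0) (j := 1) (by decide) rfl,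
    Matrix.det_zero_of_row_eq (i := 0) (j := 2) (by decide) rfl,
    Matrix.det_zero_of_row_eq (i := 1) (j := 2) (by decide) rfl]

theorem linearIndependent_triple_iff_det_ne_zero (v : ι → Fin 3 → K) {i j k : ι}
    (hij : i ≠ j) (hik : i ≠ k) (hjk : j ≠ k) :
    LinearIndependent K (fun x : ({i, j, k} : Set ι) => v x) ↔
      Matrix.det ![v i, v j, v k] ≠ 0 := by
  have hinj : Function.Injective ![i, j, k] := by
    intro a b; fin_cases a <;> fin_cases b <;> simp [hij, hik, hjk, hij.symm, hik.symm, hjk.symm]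
  have hrange : Set.range ![i, j, k] = {i, j, k} := by
    rw [Matrix.range_cons, Matrix.range_cons, Matrix.range_cons, Matrix.range_empty,
      union_empty]
    rfl
  have hrows : (fun r => v (![i, j, k] r)) = ![v i, v j, v k] := by
    ext r : 1; fin_cases r <;> rfl
  rw [← hrange, ← linearIndependent_equiv (Equiv.ofInjective _ hinj)]
  change LinearIndependent K (fun r => v (![i, j, k] r)) ↔ _
  rw [hrows]
  exact (Matrix.linearIndependent_rows_iff_isUnit (A := ![v i, v j, v k])).trans
    (Matrix.isUnit_iff_isUnit_det _ |>.trans isUnit_iff_ne_zero)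

end Determinants

theorem IsColMatroid.isBase_of_indep_of_ncard_eq {K ι m : Type*} [Field K] [Fintype m]
    {M : Matroid ι} {A : Matrix m ι K} (hM : IsColMatroid M A) {B : Set ι} (hB : M.Indep B)
    (hcard : B.ncard = Fintype.card m) : M.IsBase B := by
  rw [isBase_iff_maximal_indep]
  refine ⟨hB, fun I hI hBI => ?_⟩
  have hli := (hM.2 I).1 hI
  have : Finite I := hli.finite
  have := Fintype.ofFinite I
  have hle : I.ncard ≤ Fintype.card m := by
    rw [← Nat.card_coe_set_eq, Nat.card_eq_fintype_card]
    simpa using hli.fintype_card_le_finrank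
  exact (Set.eq_of_subset_of_ncard_le hBI (hle.trans hcard.ge) I.toFinite).ge

section RankThree

variable {K ι : Type*} [Field K] {M : Matroid ι} {A : Matrix (Fin 3) ι K}

theorem IsColMatroid.isBase_triple_iff (hM : IsColMatroid M A) {i j k : ι}
    (hij : i ≠ j) (hik : i ≠ k) (hjk : j ≠ k) :
    M.IsBase {i, j, k} ↔ Matrix.det ![Aᵀ i, Aᵀ j, Aᵀ k] ≠ 0 := by
  rw [← linearIndependent_triple_iff_det_ne_zero Aᵀ hij hik hjk, ← hM.2]
  refine ⟨IsBase.indep, fun h => hM.isBase_of_indep_of_ncard_eq h ?_⟩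
  rw [Fintype.card_fin]
  exact Set.ncard_eq_three.2 ⟨i, j, k, hij, hik, hjk, rfl⟩

theorem IsColMatroid.ncard_eq_three_of_isBase (hM : IsColMatroid M A)
    (hA : ∃ i j k, Matrix.det ![Aᵀ i, Aᵀ j, Aᵀ k] ≠ 0) {B : Set ι} (hB : M.IsBase B) :
    B.ncard = 3 := by
  obtain ⟨i, j, k, h⟩ := hA
  obtain ⟨hij, hik, hjk⟩ := pairwise_ne_of_det_ne_zero h
  rw [hB.ncard_eq_ncard_of_isBase ((hM.isBase_triple_iff hij hik hjk).2 h)]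
  exact Set.ncard_eq_three.2 ⟨i, j, k, hij, hik, hjk, rfl⟩

theorem IsColMatroid.isBase_insert_pair_iff (hM : IsColMatroid M A)
    (hA : ∃ i j k, Matrix.det ![Aᵀ i, Aᵀ j, Aᵀ k] ≠ 0) {x y : ι} (hxy : x ≠ y) (f : ι) :
    M.IsBase (insert f {x, y}) ↔ Matrix.det ![Aᵀ f, Aᵀ x, Aᵀ y] ≠ 0 := by
  by_cases hf : f = x ∨ f = y
  · have hdet : Matrix.det ![Aᵀ f, Aᵀ x, Aᵀ y] = 0 := by
      rcases hf with rfl | rfl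
      exacts [Matrix.det_zero_of_row_eq (i := 0) (j := 1) (by decide) rfl,
        Matrix.det_zero_of_row_eq (i := 0) (j := 2) (by decide) rfl]
    refine iff_of_false (fun hB => ?_) (not_not.2 hdet)
    have h3 := hM.ncard_eq_three_of_isBase hA hB
    rw [Set.insert_eq_of_mem (by simpa using hf), Set.ncard_pair hxy] at h3
    exact absurd h3 (by decide)
  · rw [not_or] at hf
    exact hM.isBase_triple_iff hf.1 hf.2 hxy

theorem IsColMatroid.isCocircuit_iff (hM : IsColMatroid M A)
    (hA : ∃ i j k, Matrix.det ![Aᵀ i, Aᵀ j, Aᵀ k] ≠ 0) {C : Set ι} :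
    M.IsCocircuit C ↔ C.Nonempty ∧ ∃ x y, C = {f | Matrix.det ![Aᵀ f, Aᵀ x, Aᵀ y] ≠ 0} := by
  constructor
  · intro hC
    obtain ⟨e, he⟩ := hC.nonempty
    obtain ⟨B, hB, heB, rfl⟩ := exists_eq_fundCocircuit_of_isCocircuit hC he
    obtain ⟨x, y, hxy, hBe⟩ : ∃ x y, x ≠ y ∧ B \ {e} = {x, y} := by
      rw [← Set.ncard_eq_two, ncard_sdiff_singleton_of_mem heB,
        hM.ncard_eq_three_of_isBase hA hB]
    refine ⟨⟨e, he⟩, x, y, ?_⟩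
    ext f
    change M.IsBase (insert f (B \ {e})) ↔ _
    rw [hBe]
    exact hM.isBase_insert_pair_iff hA hxy f
  · rintro ⟨⟨e, he⟩, x, y, rfl⟩
    obtain ⟨hex, hey, hxy⟩ := pairwise_ne_of_det_ne_zero he
    have hBe : ({e, x, y} : Set ι) \ {e} = {x, y} := by
      simp [hex, hey]
    have hC : IPF.fundCocircuit M {e, x, y} e = {f | Matrix.det ![Aᵀ f, Aᵀ x, Aᵀ y] ≠ 0} := by
      ext f
      change M.IsBase (insert f _) ↔ _
      rw [hBe]
      exact hM.isBase_insert_pair_iff hA hxy f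
    exact hC ▸ isCocircuit_fundCocircuit ((hM.isBase_triple_iff hex hey hxy).2 he) (mem_insert _ _)

end RankThree

theorem setOf_nonempty_eq_image_erase_empty {β : Type*} [Fintype β] [DecidableEq α]
    (T : β → Finset α) :
    {C : Set α | C.Nonempty ∧ ∃ b, C = T b} =
      (↑) '' (↑((Finset.univ.image T).erase ∅) : Set (Finset α)) := by
  ext C
  simp only [mem_ofPred_eq, Finset.coe_erase, Finset.coe_image, Finset.coe_univ, image_univ,
    mem_image, mem_sdiff, mem_range, mem_singleton_iff]
  constructor
  · rintro ⟨hne, b, rfl⟩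
    exact ⟨T b, ⟨⟨b, rfl⟩, by simpa [Finset.nonempty_iff_ne_empty] using hne⟩, rfl⟩
  · rintro ⟨_, ⟨⟨b, rfl⟩, hne⟩, rfl⟩
    exact ⟨by simpa [Finset.nonempty_iff_ne_empty] using hne, b, rfl⟩

theorem exists_det_Nmat_ne_zero : ∃ i j k, Matrix.det ![Nmatᵀ i, Nmatᵀ j, Nmatᵀ k] ≠ 0 :=
  ⟨0, 1, 6, by decide +kernel⟩

theorem setOf_nonempty_det_Nmat_eq : {C : Set (Fin 10) | C.Nonempty ∧
      ∃ x y, C = {f | Matrix.det ![Nmatᵀ f, Nmatᵀ x, Nmatᵀ y] ≠ 0}} =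
    { {0, 1, 2, 3}, {0, 1, 4, 5, 6, 7}, {0, 2, 3, 4, 5, 6, 7},
      {1, 2, 3, 4, 5, 6, 7}, {0, 1, 4, 5, 8, 9}, {0, 2, 3, 4, 5, 8, 9},
      {1, 2, 3, 4, 5, 8, 9}, {6, 7, 8, 9} } := by
  have hsupp : ((Finset.univ : Finset (Fin 10 × Fin 10)).image fun p =>
      Finset.univ.filter fun f => Matrix.det ![Nmatᵀ f, Nmatᵀ p.1, Nmatᵀ p.2] ≠ 0).erase ∅ =
      { {0, 1, 2, 3}, {0, 1, 4, 5, 6, 7}, {0, 2, 3, 4, 5, 6, 7},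
        {1, 2, 3, 4, 5, 6, 7}, {0, 1, 4, 5, 8, 9}, {0, 2, 3, 4, 5, 8, 9},
        {1, 2, 3, 4, 5, 8, 9}, {6, 7, 8, 9} } := by
    -- the kernel evaluates the triple product much faster than the permutation sum of `det`
    simp only [← triple_product_eq_det]
    decide +kernel
  have hfin : {C : Set (Fin 10) | C.Nonempty ∧
      ∃ x y, C = {f | Matrix.det ![Nmatᵀ f, Nmatᵀ x, Nmatᵀ y] ≠ 0}} =
      {C : Set (Fin 10) | C.Nonempty ∧ ∃ p : Fin 10 × Fin 10,
        C = ↑(Finset.univ.filter fun f => Matrix.det ![Nmatᵀ f, Nmatᵀ p.1, Nmatᵀ p.2] ≠ 0)} := by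
    simp [Prod.exists]
  rw [hfin, setOf_nonempty_eq_image_erase_empty, hsupp]
  simp [image_insert_eq]

/-- The circuits of the dual of the column matroid of `N` are exactly the eight
listed sets (columns indexed `0,…,9` for `e1,…,e10`). -/
theorem stmt8 (Nm : Matroid (Fin 10)) (hN : IsColMatroid Nm Nmat) :
    ∀ C : Set (Fin 10), Circuit Nm✶ C ↔
      C ∈ ({ {0, 1, 2, 3}, {0, 1, 4, 5, 6, 7}, {0, 2, 3, 4, 5, 6, 7},
             {1, 2, 3, 4, 5, 6, 7}, {0, 1, 4, 5, 8, 9}, {0, 2, 3, 4, 5, 8, 9},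
             {1, 2, 3, 4, 5, 8, 9}, {6, 7, 8, 9} } : Set (Set (Fin 10))) := by
  intro C
  rw [circuit_iff_isCircuit, ← isCocircuit_def, hN.isCocircuit_iff exists_det_Nmat_ne_zero]
  exact Set.ext_iff.1 setOf_nonempty_det_Nmat_eq C

end IPF
end

section
/- In the dual M of the vector matroid of the matrix N (as in the previous context), the closure of every circuit of M has cardinality at most 8; in particular, M has no spanning circuit. -/
open Matroid Set

namespace IPF

variable {α : Type*}

/-!
The pairs `{2,3}, {4,5}, {6,7}, {8,9}` are parallel in `N`, so they are cocircuits of `M = N*`.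
A circuit of `M` meets each of them in both elements or in none, and if it misses a cocircuit
then so does its closure, the complement of a cocircuit being a flat. A circuit missing one of the
pairs therefore has closure of size at most `8`. It cannot contain all of them: as a cocircuit
of `N`, its complement together with `2` would span `N`, yet this set lies in `{0,1,2}`, whose
columns lie in the plane `z = 0`.
-/

lemma Circuit.isCircuit {M : Matroid α} {C : Set α} (hC : Circuit M C) : M.IsCircuit C := by
  rw [isCircuit_iff_forall_ssubset, Dep]
  exact ⟨⟨hC.2.1, hC.1⟩, fun I hI => hC.2.2 I hI⟩

end IPF

namespace Matroid

variable {α : Type*} {M : Matroid α} {C K X : Set α} {a b e : α}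

lemma IsCocircuit.disjoint_closure_of_disjoint (hK : M.IsCocircuit K) (hXK : Disjoint X K) :
    Disjoint (M.closure X) K := by
  refine Set.disjoint_left.2 fun e heX heK => ?_
  obtain ⟨C, hCX, hC, heC⟩ := exists_isCircuit_of_mem_closure heX (hXK.notMem_of_mem_right heK)
  refine hC.inter_isCocircuit_ne_singleton hK (e := e) (Set.ext fun f => ⟨?_, ?_⟩)
  · rintro ⟨hfC, hfK⟩
    obtain rfl | hfX := hCX hfC
    · rfl
    · exact absurd hfK (hXK.notMem_of_mem_left hfX)
  · rintro rfl
    exact ⟨heC, heK⟩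

lemma IsCircuit.pair_subset_or_disjoint_closure (hC : M.IsCircuit C) (hK : M.IsCocircuit {a, b}) :
    {a, b} ⊆ C ∨ Disjoint (M.closure C) {a, b} := by
  rcases hC.isCocircuit_disjoint_or_nontrivial_inter hK with
    hdisj | ⟨x, ⟨hxC, hx⟩, y, ⟨hyC, hy⟩, hxy⟩
  · exact Or.inr (hK.disjoint_closure_of_disjoint hdisj)
  · left
    rcases hx with rfl | rfl <;> rcases hy with rfl | rfl
    all_goals first
      | exact absurd rfl hxy
      | exact insert_subset hxC (singleton_subset_iff.2 hyC)
      | exact insert_subset hyC (singleton_subset_iff.2 hxC)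

lemma IsCocircuit.spanning_insert_compl (hK : M.IsCocircuit K) (he : e ∈ K) :
    M.Spanning (insert e (M.E \ K)) := by
  have hco : M.Coindep (K \ {e}) := hK.isCircuit.sdiff_singleton_indep he
  convert hco.compl_spanning using 1
  ext x
  have hKE := hK.subset_ground
  have heE := hK.subset_ground he
  by_cases hx : x = e <;> simp_all

end Matroid

namespace IPF

section ColMatroid

open scoped Matrix

variable {m n K : Type*} [Field K] {M : Matroid n} {A : Matrix m n K}

lemma IsColMatroid.indep_iff (hM : IsColMatroid M A) {I : Set n} :
    M.Indep I ↔ LinearIndepOn K Aᵀ I :=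
  hM.2 I

lemma IsColMatroid.isCircuit_pair (hM : IsColMatroid M A) {a b : n} (hab : a ≠ b)
    (ha : Aᵀ a ≠ 0) (hba : Aᵀ a = Aᵀ b) : M.IsCircuit {a, b} := by
  rw [isCircuit_iff_dep_forall_sdiff_singleton_indep, Dep, hM.1, hM.indep_iff,
    linearIndepOn_pair_iff _ hab ha]
  refine ⟨⟨fun h => h 1 (by rw [one_smul, hba]), subset_univ _⟩, ?_⟩
  rintro e (rfl | rfl)
  · rw [pair_sdiff_left hab, hM.indep_iff]
    exact .singleton (hba ▸ ha)
  · rw [pair_sdiff_right hab, hM.indep_iff]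
    exact .singleton ha

lemma IsColMatroid.notMem_closure (hM : IsColMatroid M A) (φ : (m → K) →ₗ[K] K) {X : Set n}
    {e : n} (hX : ∀ x ∈ X, φ (Aᵀ x) = 0) (he : φ (Aᵀ e) ≠ 0) : e ∉ M.closure X := by
  obtain ⟨I, hI⟩ := M.exists_isBasis X (by simp [hM.1])
  have heI : e ∉ I := fun h => he (hX e (hI.subset h))
  rw [← hI.closure_eq_closure, hI.indep.notMem_closure_iff_of_notMem heI (by simp [hM.1]),
    hM.indep_iff]
  have hspan : Submodule.span K (Aᵀ '' I) ≤ LinearMap.ker φ :=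
    Submodule.span_le.2 (by rintro _ ⟨x, hx, rfl⟩; exact hX x (hI.subset hx))
  exact (hM.indep_iff.1 hI.indep).insert fun h => he (hspan h)

end ColMatroid

section Nmat

variable {Nm : Matroid (Fin 10)}

lemma IsColMatroid.nmat_isCircuit_pair (hN : IsColMatroid Nm Nmat) {a : Fin 10}
    (ha : a ∈ ({2, 4, 6, 8} : Set (Fin 10))) : Nm.IsCircuit {a, a + 1} := by
  rcases ha with rfl | rfl | rfl | rfl <;>
  exact hN.isCircuit_pair (by decide)
    (ne_of_apply_ne (fun v => v 1 - v 0) (by simp [Nmat] <;> norm_num))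
    (by funext i; fin_cases i <;> rfl)

lemma IsColMatroid.nmat_not_spanning (hN : IsColMatroid Nm Nmat) : ¬ Nm.Spanning {0, 1, 2} := by
  intro hsp
  refine hN.notMem_closure (X := {0, 1, 2}) (e := 6) (LinearMap.proj 2) ?_ (by simp [Nmat]) ?_
  · rintro x (rfl | rfl | rfl) <;> simp [Nmat]
  · simp [hsp.closure_eq, hN.1]

lemma IsColMatroid.nmat_not_subset_dual_circuit (hN : IsColMatroid Nm Nmat) {C : Set (Fin 10)}
    (hC : Nm✶.IsCircuit C) : ¬ {2, 3, 4, 5, 6, 7, 8, 9} ⊆ C := by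
  intro hsub
  have hsp := (isCocircuit_def.2 hC).spanning_insert_compl (hsub (by simp) : 2 ∈ C)
  refine hN.nmat_not_spanning (hsp.superset ?_ (by simp [hN.1]))
  intro x hx
  rw [hN.1] at hx
  fin_cases x <;> simp_all [insert_subset_iff]

lemma IsColMatroid.nmat_exists_disjoint_closure (hN : IsColMatroid Nm Nmat) {C : Set (Fin 10)}
    (hC : Nm✶.IsCircuit C) : ∃ a b, a ≠ b ∧ Disjoint (Nm✶.closure C) {a, b} := by
  by_contra! h
  have hpairs : ∀ a ∈ ({2, 4, 6, 8} : Set (Fin 10)), {a, a + 1} ⊆ C := fun a ha =>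
    (hC.pair_subset_or_disjoint_closure (hN.nmat_isCircuit_pair ha).isCocircuit).resolve_right
      (h a (a + 1) (by rcases ha with rfl | rfl | rfl | rfl <;> decide))
  refine hN.nmat_not_subset_dual_circuit hC ?_
  simp only [mem_insert_iff, mem_singleton_iff, forall_eq_or_imp, forall_eq,
    insert_subset_iff, singleton_subset_iff] at hpairs ⊢
  tauto

end Nmat

/-- In the dual of the column matroid of `N`, the closure of every circuit has at
most 8 elements; in particular there is no spanning circuit. -/
theorem stmt9 (Nm : Matroid (Fin 10)) (hN : IsColMatroid Nm Nmat) :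
    (∀ C, Circuit Nm✶ C → (Nm✶.closure C).ncard ≤ 8) ∧
      ∀ C, Circuit Nm✶ C → Nm✶.closure C ≠ Nm✶.E := by
  refine ⟨fun C hC => ?_, fun C hC hspan => ?_⟩
  · obtain ⟨a, b, hab, hdisj⟩ := hN.nmat_exists_disjoint_closure hC.isCircuit
    calc (Nm✶.closure C).ncard ≤ ({a, b}ᶜ : Set (Fin 10)).ncard :=
          ncard_le_ncard (subset_compl_iff_disjoint_right.2 hdisj)
      _ = 8 := by rw [ncard_compl, ncard_pair hab, Nat.card_eq_fintype_card, Fintype.card_fin]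
  · obtain ⟨a, b, -, hdisj⟩ := hN.nmat_exists_disjoint_closure hC.isCircuit
    rw [hspan, dual_ground, hN.1] at hdisj
    exact hdisj.ne_of_mem (mem_univ a) (mem_insert a _) rfl

end IPF
end
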